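/- (Lemma 3, case (i)) In the asymptotic coupon collector setting, if α_1 = 0 and α_2 = 0, then Var(X_n) is asymptotically equivalent to E(X_n), i.e. Var(X_n)/E(X_n) → 1 as n → ∞. -/

import Mathlib

open Finset

lemma mem_finset_inf {α ι : Type*} [DecidableEq α] [Fintype α] (s : Finset ι)
    (f : ι → Finset α) (j : α) :
    j ∈ s.inf f ↔ ∀ i ∈ s, j ∈ f i := by
  classical
  rw [← Finset.singleton_subset_iff, ← Finset.le_iff_subset, Finset.le_inf_iff]
  simp [Finset.singleton_subset_iff]

lemma count_mem1 {n a : ℕ} (ha : 1 ≤ a) (j : Fin n) :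
    ((univ : Finset (Finset (Fin n))).filter (fun s => s.card = a ∧ j ∈ s)).card
      = (n-1).choose (a-1) := by
  classical
  rw [show (n-1).choose (a-1) = (((univ : Finset (Fin n)).erase j).powersetCard (a-1)).card by
    rw [Finset.card_powersetCard, Finset.card_erase_of_mem (Finset.mem_univ j), Finset.card_univ,
      Fintype.card_fin]]
  apply Finset.card_nbij' (fun s => s.erase j) (fun t => insert j t)
  · intro s hs
    simp only [Finset.mem_coe, Finset.mem_filter, Finset.mem_univ, true_and] at hs
    rw [Finset.mem_coe, Finset.mem_powersetCard]
    refine ⟨fun x hx => ?_, ?_⟩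
    · simp only [Finset.mem_erase] at hx ⊢
      exact ⟨hx.1, Finset.mem_univ x⟩
    · rw [Finset.card_erase_of_mem hs.2, hs.1]
  · intro t ht
    rw [Finset.mem_coe, Finset.mem_powersetCard] at ht
    have hjt : j ∉ t := fun h => by simpa using ht.1 h
    simp only [Finset.mem_coe, Finset.mem_filter, Finset.mem_univ, true_and]
    refine ⟨?_, Finset.mem_insert_self _ _⟩
    rw [Finset.card_insert_of_notMem hjt, ht.2]; omega
  · intro s hs
    simp only [Finset.mem_coe, Finset.mem_filter, Finset.mem_univ, true_and] at hs
    exact Finset.insert_erase hs.2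
  · intro t ht
    rw [Finset.mem_coe, Finset.mem_powersetCard] at ht
    have hjt : j ∉ t := fun h => by simpa using ht.1 h
    exact Finset.erase_insert hjt

lemma count_mem2 {n a : ℕ} (ha : 2 ≤ a) {j k : Fin n} (hjk : j ≠ k) :
    ((univ : Finset (Finset (Fin n))).filter (fun s => s.card = a ∧ j ∈ s ∧ k ∈ s)).card
      = (n-2).choose (a-2) := by
  classical
  have hcard : (((univ : Finset (Fin n)).erase j).erase k).card = n - 2 := by
    rw [Finset.card_erase_of_mem (Finset.mem_erase.2 ⟨Ne.symm hjk, Finset.mem_univ k⟩),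
      Finset.card_erase_of_mem (Finset.mem_univ j), Finset.card_univ, Fintype.card_fin]
    omega
  rw [show (n-2).choose (a-2)
      = ((((univ : Finset (Fin n)).erase j).erase k).powersetCard (a-2)).card by
    rw [Finset.card_powersetCard, hcard]]
  apply Finset.card_nbij' (fun s => (s.erase j).erase k) (fun t => insert j (insert k t))
  · intro s hs
    simp only [Finset.mem_coe, Finset.mem_filter, Finset.mem_univ, true_and] at hs
    obtain ⟨hc, hj, hk⟩ := hs
    rw [Finset.mem_coe, Finset.mem_powersetCard]
    refine ⟨fun x hx => ?_, ?_⟩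
    · simp only [Finset.mem_erase] at hx ⊢
      exact ⟨hx.1, hx.2.1, Finset.mem_univ x⟩
    · rw [Finset.card_erase_of_mem (Finset.mem_erase.2 ⟨Ne.symm hjk, hk⟩),
        Finset.card_erase_of_mem hj, hc]
      omega
  · intro t ht
    rw [Finset.mem_coe, Finset.mem_powersetCard] at ht
    have hkt : k ∉ t := fun h => by simpa using ht.1 h
    have hjt : j ∉ t := fun h => by
      have := Finset.mem_erase.1 (ht.1 h)
      have := Finset.mem_erase.1 this.2
      exact this.1 rfl
    simp only [Finset.mem_coe, Finset.mem_filter, Finset.mem_univ, true_and]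
    refine ⟨?_, Finset.mem_insert_self _ _,
      Finset.mem_insert_of_mem (Finset.mem_insert_self _ _)⟩
    rw [Finset.card_insert_of_notMem (by simp [hjt, hjk]),
      Finset.card_insert_of_notMem hkt, ht.2]
    omega
  · intro s hs
    simp only [Finset.mem_coe, Finset.mem_filter, Finset.mem_univ, true_and] at hs
    obtain ⟨hc, hj, hk⟩ := hs
    beta_reduce
    rw [Finset.insert_erase (Finset.mem_erase.2 ⟨Ne.symm hjk, hk⟩), Finset.insert_erase hj]
  · intro t ht
    rw [Finset.mem_coe, Finset.mem_powersetCard] at ht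
    have hkt : k ∉ t := fun h => by simpa using ht.1 h
    have hjt : j ∉ t := fun h => by
      have := Finset.mem_erase.1 (ht.1 h)
      have := Finset.mem_erase.1 this.2
      exact this.1 rfl
    beta_reduce
    rw [Finset.erase_insert (by simp [hjt, hjk]), Finset.erase_insert hkt]
open MeasureTheory ProbabilityTheory Filter Finset
open scoped ENNReal NNReal Topology

section probs
variable {W : Type*} [MeasurableSpace W] {n aa : ℕ} (P : Measure W)
  (T : W → Finset (Fin n))

lemma event_eq (B : Finset (Fin n) → Prop) [DecidablePred B] :
    {ω | B (T ω)} = ⋃ s ∈ (univ : Finset (Finset (Fin n))).filter B, {ω | T ω = s} := by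
  ext ω; simp [eq_comm]

lemma event_meas (hmeas : ∀ s, MeasurableSet {ω | T ω = s})
    (B : Finset (Fin n) → Prop) [DecidablePred B] :
    MeasurableSet {ω | B (T ω)} := by
  rw [event_eq]
  exact (Finset.measurableSet_biUnion _ (fun s _ => hmeas s))

lemma event_prob (hmeas : ∀ s, MeasurableSet {ω | T ω = s}) (c : ℝ≥0∞)
    (hu : ∀ s, P {ω | T ω = s} = if s.card = aa then c else 0)
    (B : Finset (Fin n) → Prop) [DecidablePred B] :
    P {ω | B (T ω)}
      = ((univ : Finset (Finset (Fin n))).filter (fun s => B s ∧ s.card = aa)).card * c := by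
  classical
  rw [event_eq, measure_biUnion_finset ?_ (fun s _ => hmeas s)]
  · have : ∀ s ∈ (univ : Finset (Finset (Fin n))).filter B,
        P {ω | T ω = s} = if s.card = aa then c else 0 := fun s _ => hu s
    rw [Finset.sum_congr rfl this, ← Finset.sum_filter, Finset.filter_filter,
      Finset.sum_const, nsmul_eq_mul]
  · intro s hs t ht hst
    rw [Function.onFun, Set.disjoint_left]
    rintro ω (h1 : T ω = s) (h2 : T ω = t)
    exact hst (h1 ▸ h2 ▸ rfl)

end probs

lemma nat_id1 {n aa : ℕ} (ha : 1 ≤ aa) (hn : 1 ≤ n) :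
    n * (n-1).choose (aa-1) = aa * n.choose aa := by
  have h := Nat.add_one_mul_choose_eq (n-1) (aa-1)
  have h1 : n-1+1 = n := by omega
  have h2 : aa-1+1 = aa := by omega
  rw [h1, h2] at h
  rw [h, Nat.mul_comm]

lemma nat_id2 {n aa : ℕ} (ha : 2 ≤ aa) (hn : 2 ≤ n) :
    (n-1) * (n-2).choose (aa-2) = (aa-1) * (n-1).choose (aa-1) := by
  have h := Nat.add_one_mul_choose_eq (n-2) (aa-2)
  have h1 : n-2+1 = n-1 := by omega
  have h2 : aa-2+1 = aa-1 := by omega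
  rw [h1, h2] at h
  rw [h, Nat.mul_comm]

lemma real_id1 {n aa : ℕ} (ha : 1 ≤ aa) (han : aa ≤ n) :
    ((n-1).choose (aa-1) : ℝ) / (n.choose aa : ℝ) = (aa : ℝ) / n := by
  have hn : 1 ≤ n := le_trans ha han
  have hc : 0 < n.choose aa := Nat.choose_pos han
  rw [div_eq_div_iff (Nat.cast_ne_zero.2 hc.ne') (Nat.cast_ne_zero.2 (by omega))]
  have h : (n-1).choose (aa-1) * n = aa * n.choose aa := by
    rw [Nat.mul_comm]; exact nat_id1 ha hn
  exact_mod_cast h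

lemma real_id2 {n aa : ℕ} (ha : 2 ≤ aa) (han : aa ≤ n) :
    ((n-2).choose (aa-2) : ℝ) / (n.choose aa : ℝ)
      = ((aa : ℝ) * ((aa : ℝ) - 1)) / ((n : ℝ) * ((n : ℝ) - 1)) := by
  have hn : 2 ≤ n := le_trans ha han
  have hc : 0 < n.choose aa := Nat.choose_pos han
  have key : (n * (n-1)) * (n-2).choose (aa-2) = (aa * (aa-1)) * n.choose aa := by
    calc (n * (n-1)) * (n-2).choose (aa-2) = n * ((n-1) * (n-2).choose (aa-2)) := by ring
    _ = n * ((aa-1) * (n-1).choose (aa-1)) := by rw [nat_id2 ha hn]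
    _ = (aa-1) * (n * (n-1).choose (aa-1)) := by ring
    _ = (aa-1) * (aa * n.choose aa) := by rw [nat_id1 (by omega) (by omega)]
    _ = (aa * (aa-1)) * n.choose aa := by ring
  have hpos : (0:ℝ) < (n : ℝ) * ((n:ℝ) - 1) := by
    have : (2:ℝ) ≤ (n:ℝ) := by exact_mod_cast hn
    nlinarith
  rw [div_eq_div_iff (Nat.cast_ne_zero.2 hc.ne') hpos.ne']
  have : ((n:ℝ) * ((n:ℝ)-1)) * ((n-2).choose (aa-2) : ℝ)
      = ((aa:ℝ) * ((aa:ℝ)-1)) * (n.choose aa : ℝ) := by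
    have c1 : ((n-1 : ℕ) : ℝ) = (n:ℝ) - 1 := by
      have : 1 ≤ n := by omega
      push_cast [this]; ring
    have c2 : ((aa-1 : ℕ) : ℝ) = (aa:ℝ) - 1 := by
      have : 1 ≤ aa := by omega
      push_cast [this]; ring
    calc ((n:ℝ) * ((n:ℝ)-1)) * ((n-2).choose (aa-2) : ℝ)
        = (((n * (n-1)) * (n-2).choose (aa-2) : ℕ) : ℝ) := by push_cast [c1]; ring
    _ = (((aa * (aa-1)) * n.choose aa : ℕ) : ℝ) := congrArg (fun x : ℕ => (x:ℝ)) key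
    _ = ((aa:ℝ) * ((aa:ℝ)-1)) * (n.choose aa : ℝ) := by push_cast [c2]; ring
  linarith [this]

section probs2
variable {W : Type*} [MeasurableSpace W] {n aa : ℕ} (P : Measure W)
  (T : W → Finset (Fin n))

lemma prob_single (hmeas : ∀ s, MeasurableSet {ω | T ω = s})
    (hu : ∀ s, P {ω | T ω = s} = if s.card = aa then ((n.choose aa : ℝ≥0∞))⁻¹ else 0)
    (ha : 1 ≤ aa) (han : aa ≤ n) (j : Fin n) :
    (P {ω | j ∈ T ω}).toReal = (aa : ℝ) / (n : ℝ) := by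
  classical
  have h := event_prob P T hmeas _ hu (fun s => j ∈ s)
  have hfilter : (univ : Finset (Finset (Fin n))).filter (fun s => j ∈ s ∧ s.card = aa)
      = (univ : Finset (Finset (Fin n))).filter (fun s => s.card = aa ∧ j ∈ s) := by
    apply Finset.filter_congr; intro s _; simp [and_comm]
  rw [hfilter, count_mem1 ha j] at h
  rw [h, ENNReal.toReal_mul, ENNReal.toReal_inv, ENNReal.toReal_natCast, ENNReal.toReal_natCast,
    ← div_eq_mul_inv, real_id1 ha han]

lemma prob_pair (hmeas : ∀ s, MeasurableSet {ω | T ω = s})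
    (hu : ∀ s, P {ω | T ω = s} = if s.card = aa then ((n.choose aa : ℝ≥0∞))⁻¹ else 0)
    (ha : 2 ≤ aa) (han : aa ≤ n) {j k : Fin n} (hjk : j ≠ k) :
    (P {ω | j ∈ T ω ∧ k ∈ T ω}).toReal
      = ((aa : ℝ) * ((aa:ℝ) - 1)) / ((n : ℝ) * ((n:ℝ) - 1)) := by
  classical
  have h := event_prob P T hmeas _ hu (fun s => j ∈ s ∧ k ∈ s)
  have hfilter : (univ : Finset (Finset (Fin n))).filter (fun s => (j ∈ s ∧ k ∈ s) ∧ s.card = aa)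
      = (univ : Finset (Finset (Fin n))).filter (fun s => s.card = aa ∧ j ∈ s ∧ k ∈ s) := by
    apply Finset.filter_congr; intro s _; simp [and_comm, and_assoc, and_left_comm]
  rw [hfilter, count_mem2 ha hjk] at h
  rw [h, ENNReal.toReal_mul, ENNReal.toReal_inv, ENNReal.toReal_natCast, ENNReal.toReal_natCast,
    ← div_eq_mul_inv, real_id2 ha han]

end probs2

lemma prod_le_single {ι : Type*} [DecidableEq ι] {t : Finset ι} {r : ι → ℝ} {k : ι} (hk : k ∈ t)
    (h0 : ∀ i ∈ t, 0 ≤ r i) (h1 : ∀ i ∈ t, r i ≤ 1) :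
    ∏ i ∈ t, r i ≤ r k := by
  rw [← Finset.mul_prod_erase t r hk]
  calc r k * ∏ i ∈ t.erase k, r i ≤ r k * 1 := by
        apply mul_le_mul_of_nonneg_left _ (h0 k hk)
        exact Finset.prod_le_one (fun i hi => h0 i (Finset.mem_of_mem_erase hi))
          (fun i hi => h1 i (Finset.mem_of_mem_erase hi))
    _ = r k := mul_one _

lemma prod_sub_prod_le {ι : Type*} [DecidableEq ι] (t : Finset ι) (r s : ι → ℝ)
    (hs0 : ∀ i ∈ t, 0 ≤ s i) (hsr : ∀ i ∈ t, s i ≤ r i) (hr1 : ∀ i ∈ t, r i ≤ 1) :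
    ∏ i ∈ t, r i - ∏ i ∈ t, s i ≤ ∑ i ∈ t, (r i - s i) * ∏ j ∈ t.erase i, r j := by
  classical
  induction t using Finset.induction_on with
  | empty => simp
  | @insert b t hb IH =>
    have hs0' : ∀ i ∈ t, 0 ≤ s i := fun i hi => hs0 i (Finset.mem_insert_of_mem hi)
    have hsr' : ∀ i ∈ t, s i ≤ r i := fun i hi => hsr i (Finset.mem_insert_of_mem hi)
    have hr1' : ∀ i ∈ t, r i ≤ 1 := fun i hi => hr1 i (Finset.mem_insert_of_mem hi)
    have hr0' : ∀ i ∈ t, 0 ≤ r i := fun i hi => le_trans (hs0' i hi) (hsr' i hi)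
    have hb0 : 0 ≤ r b := le_trans (hs0 b (Finset.mem_insert_self b t))
      (hsr b (Finset.mem_insert_self b t))
    rw [Finset.prod_insert hb, Finset.prod_insert hb, Finset.sum_insert hb]
    have key : r b * ∏ i ∈ t, r i - s b * ∏ i ∈ t, s i
        = r b * (∏ i ∈ t, r i - ∏ i ∈ t, s i) + (r b - s b) * ∏ i ∈ t, s i := by ring
    rw [key]
    have h1 : r b * (∏ i ∈ t, r i - ∏ i ∈ t, s i)
        ≤ r b * ∑ i ∈ t, (r i - s i) * ∏ j ∈ t.erase i, r j :=
      mul_le_mul_of_nonneg_left (IH hs0' hsr' hr1') hb0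
    have h2 : (r b - s b) * ∏ i ∈ t, s i ≤ (r b - s b) * ∏ i ∈ t, r i := by
      apply mul_le_mul_of_nonneg_left (Finset.prod_le_prod hs0' hsr')
      linarith [hsr b (Finset.mem_insert_self b t)]
    have e1 : (insert b t).erase b = t := Finset.erase_insert hb
    have e2 : ∀ i ∈ t, (insert b t).erase i = insert b (t.erase i) := by
      intro i hi
      rw [Finset.erase_insert_of_ne]
      rintro rfl; exact hb hi
    have e3 : ∑ i ∈ t, (r i - s i) * ∏ j ∈ (insert b t).erase i, r j
        = r b * ∑ i ∈ t, (r i - s i) * ∏ j ∈ t.erase i, r j := by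
      rw [Finset.mul_sum]
      apply Finset.sum_congr rfl
      intro i hi
      rw [e2 i hi, Finset.prod_insert (fun h => hb (Finset.mem_of_mem_erase h))]
      ring
    rw [e1, e3]
    linarith

lemma per_n {W : Type} [MeasurableSpace W] (P : Measure W) [IsProbabilityMeasure P]
    {m n : ℕ} (hn : 2 ≤ n)
    (aa : Fin m → ℕ) (S : Fin m → W → Finset (Fin n))
    (hmeas : ∀ (i : Fin m) (s : Finset (Fin n)), MeasurableSet {ω | S i ω = s})
    (hindep : iIndepFun (m := fun _ => ⊤) S P)
    (hunif : ∀ (i : Fin m) (s : Finset (Fin n)),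
      P {ω | S i ω = s} = if s.card = aa i then ((n.choose (aa i) : ℝ≥0∞))⁻¹ else 0)
    (X : W → ℕ) (hX : ∀ ω, X ω = (Finset.univ.inf fun i => S i ω).card)
    (ha2 : ∀ i, 2 ≤ aa i) (han : ∀ i, aa i ≤ n - 1) :
    (∫ ω, (X ω : ℝ) ∂P) = n * ∏ i, ((aa i : ℝ)/n) ∧
    variance (fun ω => (X ω : ℝ)) P
      = n * ∏ i, ((aa i : ℝ)/n)
        + n * ((n:ℝ)-1) * ∏ i, ((aa i : ℝ) * ((aa i : ℝ)-1)/((n:ℝ)*((n:ℝ)-1)))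
        - (n * ∏ i, ((aa i : ℝ)/n))^2 := by
  classical
  set p : ℝ := ∏ i, ((aa i : ℝ)/n) with hp
  set q : ℝ := ∏ i, ((aa i : ℝ) * ((aa i : ℝ)-1)/((n:ℝ)*((n:ℝ)-1))) with hq
  have han' : ∀ i, aa i ≤ n := fun i => le_trans (han i) (Nat.sub_le n 1)
  -- the events
  set A : Fin n → Set W := fun j => {ω | ∀ i, j ∈ S i ω} with hA
  have hAmeas : ∀ j, MeasurableSet (A j) := by
    intro j
    have : A j = ⋂ i, {ω | j ∈ S i ω} := by
      ext ω; simp [hA, Set.mem_iInter]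
    rw [this]
    exact MeasurableSet.iInter fun i => event_meas (S i) (hmeas i) (fun s => j ∈ s)
  -- single probabilities
  have hPj : ∀ j, (P (A j)).toReal = p := by
    intro j
    have hAeq : A j = ⋂ i, S i ⁻¹' {s | j ∈ s} := by
      ext ω; simp [hA, Set.mem_iInter, Set.mem_preimage]
    have hprod : P (A j) = ∏ i, P (S i ⁻¹' {s | j ∈ s}) := by
      rw [hAeq]
      exact hindep.meas_iInter fun i => ⟨{s | j ∈ s}, trivial, rfl⟩
    rw [hprod, ENNReal.toReal_prod, hp]
    apply Finset.prod_congr rfl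
    intro i _
    exact prob_single P (S i) (hmeas i) (hunif i) (by have := ha2 i; omega) (han' i) j
  have hPjk : ∀ j k : Fin n, j ≠ k → (P (A j ∩ A k)).toReal = q := by
    intro j k hjk
    have hAeq : A j ∩ A k = ⋂ i, S i ⁻¹' {s | j ∈ s ∧ k ∈ s} := by
      ext ω
      simp only [hA, Set.mem_inter_iff, Set.mem_setOf_eq, Set.mem_iInter, Set.mem_preimage]
      exact ⟨fun ⟨h1, h2⟩ i => ⟨h1 i, h2 i⟩, fun h => ⟨fun i => (h i).1, fun i => (h i).2⟩⟩
    have hprod : P (A j ∩ A k) = ∏ i, P (S i ⁻¹' {s | j ∈ s ∧ k ∈ s}) := by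
      rw [hAeq]
      exact hindep.meas_iInter fun i => ⟨{s | j ∈ s ∧ k ∈ s}, trivial, rfl⟩
    rw [hprod, ENNReal.toReal_prod, hq]
    apply Finset.prod_congr rfl
    intro i _
    exact prob_pair P (S i) (hmeas i) (hunif i) (ha2 i) (han' i) hjk
  -- X as a sum of indicators
  have hXind : ∀ ω, (X ω : ℝ) = ∑ j, (A j).indicator (fun _ => (1:ℝ)) ω := by
    intro ω
    have h1 : (Finset.univ.inf fun i => S i ω) = univ.filter (fun j => ∀ i, j ∈ S i ω) := by
      ext j
      simp [mem_finset_inf]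
    rw [hX ω, h1, Finset.card_filter]
    push_cast
    apply Finset.sum_congr rfl
    intro j _
    by_cases hj : ω ∈ A j
    · simp only [Set.indicator_of_mem hj]
      simp only [hA, Set.mem_setOf_eq] at hj
      simp [hj]
    · simp only [Set.indicator_of_notMem hj]
      simp only [hA, Set.mem_setOf_eq] at hj
      simp [hj]
  have hint : ∀ j, Integrable ((A j).indicator (fun _ => (1:ℝ))) P :=
    fun j => (integrable_const (1:ℝ)).indicator (hAmeas j)
  -- expectation
  have hE : (∫ ω, (X ω : ℝ) ∂P) = n * p := by
    rw [integral_congr_ae (Filter.Eventually.of_forall hXind),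
      integral_finset_sum _ (fun j _ => hint j)]
    have : ∀ j ∈ (univ : Finset (Fin n)), (∫ ω, (A j).indicator (fun _ => (1:ℝ)) ω ∂P) = p := by
      intro j _
      rw [integral_indicator_const (1:ℝ) (hAmeas j), smul_eq_mul, mul_one, measureReal_def, hPj j]
    rw [Finset.sum_congr rfl this, Finset.sum_const, Finset.card_univ, Fintype.card_fin,
      nsmul_eq_mul]
  refine ⟨hE, ?_⟩
  -- second moment
  have hX2 : ∀ ω, ((X ω : ℝ))^2 = ∑ j, ∑ k, ((A j ∩ A k).indicator (fun _ => (1:ℝ)) ω) := by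
    intro ω
    rw [sq, hXind ω, Finset.sum_mul_sum]
    apply Finset.sum_congr rfl; intro j _
    apply Finset.sum_congr rfl; intro k _
    by_cases hj : ω ∈ A j <;> by_cases hk : ω ∈ A k <;>
      simp [Set.indicator_apply, hj, hk]
  have hintjk : ∀ (j k : Fin n), Integrable ((A j ∩ A k).indicator (fun _ => (1:ℝ))) P :=
    fun j k => (integrable_const (1:ℝ)).indicator ((hAmeas j).inter (hAmeas k))
  have hE2 : (∫ ω, ((X ω : ℝ))^2 ∂P) = n * (p + ((n:ℝ)-1) * q) := by
    rw [integral_congr_ae (Filter.Eventually.of_forall hX2),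
      integral_finset_sum _ (fun j _ => integrable_finset_sum _ (fun k _ => hintjk j k))]
    have hinner : ∀ j ∈ (univ : Finset (Fin n)),
        (∫ ω, ∑ k, ((A j ∩ A k).indicator (fun _ => (1:ℝ)) ω) ∂P) = p + ((n:ℝ)-1) * q := by
      intro j _
      rw [integral_finset_sum _ (fun k _ => hintjk j k)]
      have hterm : ∀ k, (∫ ω, ((A j ∩ A k).indicator (fun _ => (1:ℝ)) ω) ∂P)
          = (P (A j ∩ A k)).toReal := by
        intro k
        rw [integral_indicator_const (1:ℝ) ((hAmeas j).inter (hAmeas k)), smul_eq_mul, mul_one, measureReal_def]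
      rw [Finset.sum_congr rfl (fun k _ => hterm k),
        ← Finset.add_sum_erase _ _ (Finset.mem_univ j), Set.inter_self, hPj j]
      have : ∀ k ∈ (univ.erase j), (P (A j ∩ A k)).toReal = q := by
        intro k hk
        exact hPjk j k (Ne.symm (Finset.mem_erase.1 hk).1)
      rw [Finset.sum_congr rfl this, Finset.sum_const, Finset.card_erase_of_mem (Finset.mem_univ j),
        Finset.card_univ, Fintype.card_fin, nsmul_eq_mul]
      push_cast [Nat.cast_sub (by omega : 1 ≤ n)]
      ring
    rw [Finset.sum_congr rfl hinner, Finset.sum_const, Finset.card_univ, Fintype.card_fin,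
      nsmul_eq_mul]
  -- variance
  have hmem : MemLp (fun ω => (X ω : ℝ)) 2 P := by
    have : (fun ω => (X ω : ℝ)) = fun ω => ∑ j, (A j).indicator (fun _ => (1:ℝ)) ω := funext hXind
    rw [this]
    have := memLp_finset_sum' (μ := P) (p := 2) univ (fun (j : Fin n) _ =>
      memLp_indicator_const 2 (hAmeas j) (1:ℝ) (Or.inr (measure_ne_top P _)))
    convert this using 1
    ext ω
    simp
  rw [variance_eq_sub hmem]
  have h2 : (∫ ω, ((fun ω => (X ω : ℝ))^2) ω ∂P) = ∫ ω, ((X ω : ℝ))^2 ∂P := rfl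
  rw [h2, hE2, hE]
  ring

lemma ratio_alg (n : ℕ) {m' : ℕ} (r s : Fin m' → ℝ) (hE0 : (n:ℝ) * ∏ i, r i ≠ 0) :
    ((n:ℝ) * ∏ i, r i + (n:ℝ) * ((n:ℝ)-1) * ((∏ i, r i) * ∏ i, s i)
        - ((n:ℝ) * ∏ i, r i)^2) / ((n:ℝ) * ∏ i, r i)
      = 1 - ((n:ℝ) * ∏ i, r i - ((n:ℝ)-1) * ∏ i, s i) := by
  set E := (n:ℝ) * ∏ i, r i with hE
  set y := ∏ i, s i with hy
  have h : (n:ℝ) * ((n:ℝ)-1) * ((∏ i, r i) * y) = ((n:ℝ)-1) * (E * y) := by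
    rw [hE]; ring
  rw [h]
  field_simp
  ring

/-- **Lemma 3, case (i).**
In the asymptotic coupon collector setting, if `α_1 = 0` and `α_2 = 0`, then
`Var(X_n) ~ E(X_n)`, i.e. `Var(X_n) / E(X_n) → 1`. -/
theorem coupon_variance_equiv_mean_case_i
    (m : ℕ) (hm : 2 ≤ m)
    (Ω : ℕ → Type) [instΩ : ∀ n, MeasurableSpace (Ω n)]
    (P : ∀ n, Measure (Ω n)) (hP : ∀ n, IsProbabilityMeasure (P n))
    (a : ℕ → Fin m → ℕ)
    (S : ∀ n, Fin m → Ω n → Finset (Fin n))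
    (hmeas : ∀ n (i : Fin m) (s : Finset (Fin n)), MeasurableSet {ω | S n i ω = s})
    (hindep : ∀ n, iIndepFun (m := fun _ => ⊤) (S n) (P n))
    (hunif : ∀ n, 2 ≤ n → ∀ (i : Fin m) (s : Finset (Fin n)),
      P n {ω | S n i ω = s} = if s.card = a n i then ((n.choose (a n i) : ℝ≥0∞))⁻¹ else 0)
    (X : ∀ n, Ω n → ℕ)
    (hX : ∀ n ω, X n ω = (Finset.univ.inf fun i => S n i ω).card)
    (hA2 : ∀ i : Fin m, Tendsto (fun n => a n i) atTop atTop ∧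
      Tendsto (fun n => n - a n i) atTop atTop)
    (hA3 : ∀ n, 2 ≤ n → Monotone (a n) ∧
      1 ≤ a n ⟨0, by omega⟩ ∧ a n ⟨m - 1, by omega⟩ ≤ n - 1)
    (α : Fin m → ℝ) (hα : ∀ i, α i ∈ Set.Icc (0 : ℝ) 1)
    (hA4 : ∀ i : Fin m, Tendsto (fun n => (a n i : ℝ) / n) atTop (𝓝 (α i)))
    (hα1 : α ⟨0, by omega⟩ = 0) (hα2 : α ⟨1, by omega⟩ = 0)
    :
    Tendsto (fun n => variance (fun ω => (X n ω : ℝ)) (P n) / ∫ ω, (X n ω : ℝ) ∂(P n))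
      atTop (𝓝 1) := by
  classical
  have hm0 : 0 < m := by omega
  set i0 : Fin m := ⟨0, by omega⟩ with hi0
  set i1 : Fin m := ⟨1, by omega⟩ with hi1
  -- the correction term
  set g : ℕ → ℝ := fun n =>
    (n:ℝ) * ∏ i, ((a n i : ℝ)/(n:ℝ)) - ((n:ℝ)-1) * ∏ i, (((a n i : ℝ)-1)/((n:ℝ)-1)) with hg
  -- eventual hypotheses
  have hev : ∀ᶠ n in atTop, 2 ≤ n ∧ (∀ i, 2 ≤ a n i) ∧ (∀ i, a n i ≤ n - 1)
      ∧ Monotone (a n) := by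
    have h1 : ∀ᶠ n in atTop, 2 ≤ n := eventually_ge_atTop 2
    have h2 : ∀ᶠ n in atTop, ∀ i, 2 ≤ a n i :=
      eventually_all.2 (fun i => (hA2 i).1.eventually_ge_atTop 2)
    filter_upwards [h1, h2] with n hn1 hn2
    have h3 := hA3 n hn1
    refine ⟨hn1, hn2, fun i => ?_, h3.1⟩
    calc a n i ≤ a n ⟨m-1, by omega⟩ := h3.1 (by
          rw [Fin.le_def]; simp; omega)
    _ ≤ n - 1 := h3.2.2
  -- the ratio equals 1 - g eventually
  have hratio : ∀ᶠ n in atTop,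
      variance (fun ω => (X n ω : ℝ)) (P n) / (∫ ω, (X n ω : ℝ) ∂(P n)) = 1 - g n := by
    filter_upwards [hev] with n ⟨hn2, h2a, hle, hmono⟩
    haveI := hP n
    obtain ⟨hE, hV⟩ := per_n (P n) hn2 (a n) (S n) (hmeas n) (hindep n) (hunif n hn2)
      (X n) (hX n) h2a hle
    have hnR : (2:ℝ) ≤ (n:ℝ) := by exact_mod_cast hn2
    have hn0 : (0:ℝ) < (n:ℝ) := by linarith
    have hn1 : (0:ℝ) < (n:ℝ) - 1 := by linarith
    have hppos : (0:ℝ) < ∏ i, ((a n i : ℝ)/(n:ℝ)) := by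
      apply Finset.prod_pos
      intro i _
      have : (2:ℝ) ≤ (a n i : ℝ) := by exact_mod_cast h2a i
      positivity
    have hq_eq : ∏ i, ((a n i : ℝ) * ((a n i : ℝ)-1)/((n:ℝ)*((n:ℝ)-1)))
        = (∏ i, ((a n i : ℝ)/(n:ℝ))) * ∏ i, (((a n i : ℝ)-1)/((n:ℝ)-1)) := by
      rw [← Finset.prod_mul_distrib]
      apply Finset.prod_congr rfl
      intro i _
      field_simp
    have hE0 : (n:ℝ) * ∏ i, ((a n i : ℝ)/(n:ℝ)) ≠ 0 := by positivity
    rw [hV, hq_eq, hE]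
    simp only [hg]
    exact ratio_alg n _ _ hE0
  -- bounds on g
  have hbounds : ∀ᶠ n in atTop,
      0 ≤ g n ∧ g n ≤ ((m:ℝ)+1) * ((a n i1 : ℝ)/(n:ℝ)) := by
    filter_upwards [hev] with n ⟨hn2, h2a, hle, hmono⟩
    have hnR : (2:ℝ) ≤ (n:ℝ) := by exact_mod_cast hn2
    have hn0 : (0:ℝ) < (n:ℝ) := by linarith
    have hn1 : (0:ℝ) < (n:ℝ) - 1 := by linarith
    set r : Fin m → ℝ := fun i => (a n i : ℝ)/(n:ℝ) with hr
    set s : Fin m → ℝ := fun i => ((a n i : ℝ)-1)/((n:ℝ)-1) with hs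
    have haR : ∀ i, (2:ℝ) ≤ (a n i : ℝ) := fun i => by exact_mod_cast h2a i
    have haleR : ∀ i, (a n i : ℝ) ≤ (n:ℝ) - 1 := by
      intro i
      have h := hle i
      have : (a n i : ℝ) ≤ ((n-1 : ℕ) : ℝ) := by exact_mod_cast h
      rwa [Nat.cast_sub (by omega), Nat.cast_one] at this
    have hs0 : ∀ i, 0 ≤ s i := by
      intro i
      rw [hs]
      apply div_nonneg (by linarith [haR i]) (by linarith)
    have hsr : ∀ i, s i ≤ r i := by
      intro i
      rw [hs, hr, div_le_div_iff₀ hn1 hn0]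
      have h1 := haR i
      have h2 := haleR i
      nlinarith
    have hr1 : ∀ i, r i ≤ 1 := by
      intro i
      rw [hr, div_le_one hn0]
      linarith [haleR i]
    have hr0 : ∀ i, 0 ≤ r i := fun i => le_trans (hs0 i) (hsr i)
    have hdiff : ∀ i, r i - s i ≤ 1/((n:ℝ)-1) := by
      intro i
      have h1 : r i ≤ (a n i : ℝ)/((n:ℝ)-1) := by
        rw [hr]
        apply div_le_div_of_nonneg_left (by linarith [haR i]) hn1 (by linarith)
      have h2 : s i + 1/((n:ℝ)-1) = (a n i : ℝ)/((n:ℝ)-1) := by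
        rw [hs, ← add_div]; ring_nf
      linarith
    have hr_i01 : r i0 ≤ r i1 := by
      rw [hr]
      refine (div_le_div_iff_of_pos_right hn0).2 ?_
      exact_mod_cast hmono (show i0 ≤ i1 from Fin.mk_le_mk.2 (Nat.zero_le 1))
    have hprod_erase : ∀ i : Fin m, ∏ j ∈ univ.erase i, r j ≤ r i1 := by
      intro i
      by_cases hii : i = i1
      · have h0mem : i0 ∈ univ.erase i := by
          rw [Finset.mem_erase, hii]
          exact ⟨by simp [hi0, hi1, Fin.ext_iff], Finset.mem_univ _⟩
        calc ∏ j ∈ univ.erase i, r j ≤ r i0 :=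
              prod_le_single h0mem (fun j _ => hr0 j) (fun j _ => hr1 j)
        _ ≤ r i1 := hr_i01
      · have h1mem : i1 ∈ univ.erase i := by
          rw [Finset.mem_erase]
          exact ⟨Ne.symm hii, Finset.mem_univ _⟩
        exact prod_le_single h1mem (fun j _ => hr0 j) (fun j _ => hr1 j)
    have hps : ∏ i, s i ≤ ∏ i, r i :=
      Finset.prod_le_prod (fun i _ => hs0 i) (fun i _ => hsr i)
    have hpr0 : 0 ≤ ∏ i, r i := Finset.prod_nonneg (fun i _ => hr0 i)
    have hsum : ∏ i, r i - ∏ i, s i ≤ (m:ℝ) * (1/((n:ℝ)-1) * r i1) := by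
      calc ∏ i, r i - ∏ i, s i
          ≤ ∑ i, (r i - s i) * ∏ j ∈ univ.erase i, r j :=
            prod_sub_prod_le univ r s (fun i _ => hs0 i) (fun i _ => hsr i) (fun i _ => hr1 i)
        _ ≤ ∑ i : Fin m, 1/((n:ℝ)-1) * r i1 := by
            apply Finset.sum_le_sum
            intro i _
            apply mul_le_mul (hdiff i) (hprod_erase i)
              (Finset.prod_nonneg (fun j _ => hr0 j)) (by positivity)
        _ = (m:ℝ) * (1/((n:ℝ)-1) * r i1) := by
            rw [Finset.sum_const, Finset.card_univ, Fintype.card_fin, nsmul_eq_mul]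
    have hg_eq : g n = ∏ i, r i + ((n:ℝ)-1) * (∏ i, r i - ∏ i, s i) := by
      simp only [hg, hr, hs]
      ring
    constructor
    · rw [hg_eq]
      nlinarith
    · rw [hg_eq]
      have h1 : ∏ i, r i ≤ r i1 :=
        prod_le_single (Finset.mem_univ i1) (fun j _ => hr0 j) (fun j _ => hr1 j)
      have h2 : ((n:ℝ)-1) * (∏ i, r i - ∏ i, s i) ≤ (m:ℝ) * r i1 := by
        calc ((n:ℝ)-1) * (∏ i, r i - ∏ i, s i)
            ≤ ((n:ℝ)-1) * ((m:ℝ) * (1/((n:ℝ)-1) * r i1)) := by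
              apply mul_le_mul_of_nonneg_left hsum (by linarith)
          _ = (m:ℝ) * r i1 := by field_simp
      have : r i1 = (a n i1 : ℝ)/(n:ℝ) := rfl
      rw [this] at h1 h2
      linarith
  -- limits
  have hlim : Tendsto (fun n => ((m:ℝ)+1) * ((a n i1 : ℝ)/(n:ℝ))) atTop (𝓝 0) := by
    have := (hA4 i1).const_mul ((m:ℝ)+1)
    rw [hα2] at this
    simpa using this
  have hgto : Tendsto g atTop (𝓝 0) := by
    apply tendsto_of_tendsto_of_tendsto_of_le_of_le' tendsto_const_nhds hlim
    · exact hbounds.mono (fun n h => h.1)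
    · exact hbounds.mono (fun n h => h.2)
  have : Tendsto (fun n => 1 - g n) atTop (𝓝 1) := by
    have := hgto.const_sub (1:ℝ)
    simpa using this
  exact this.congr' (hratio.mono (fun n h => h.symm))
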